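/- arXiv:1509.00719 — 2 statements merged into one kernel-verified Lean document; each statement's English description precedes it below -/
import Mathlib

section
/- Let G and H be Polish groups, let ψ : G → H be a normal compression, and let K be a closed normal subgroup of G. Then the image ψ(K) is a normal subgroup of H: for all h ∈ H and k ∈ K, the element h·ψ(k)·h⁻¹ lies in ψ(K). -/
/-!
Conjugation by `t ∈ H` pulls back along `ψ` to an automorphism `α t` of `G`, characterised by
`ψ (α t g) = t * ψ g * t⁻¹`. Its graph is closed, so `α t` is Borel and hence continuous by
Pettis' theorem. The closed sets `α t '' K` do not change when `t` is multiplied on the right by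
some `ψ g`, because `K` is normal; by the topological zero-one law applied to the sets
`{t | α t '' K meets V}`, `V` basic open, the map `t ↦ α t '' K` is constant on a comeagre set.
Given `h`, pick `s` such that `s` and `s * h` both lie in that set: then
`α s '' (α h '' K) = α s '' K`, so `α h '' K = K`.
-/

open Set Filter Topology Function TopologicalSpace
open scoped Pointwise

theorem measurable_of_isClosed_graph {X Y : Type*}
    [TopologicalSpace X] [PolishSpace X] [MeasurableSpace X] [BorelSpace X]
    [TopologicalSpace Y] [PolishSpace Y] [MeasurableSpace Y] [BorelSpace Y]
    {f : X → Y} (hf : IsClosed {p : X × Y | f p.1 = p.2}) : Measurable f := by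
  have := hf.polishSpace
  have hπ : MeasurableEmbedding fun p : {p : X × Y | f p.1 = p.2} => p.1.1 := by
    refine (continuous_fst.comp continuous_subtype_val).measurableEmbedding ?_
    rintro ⟨⟨x, y⟩, hy : f x = y⟩ ⟨⟨x', y'⟩, hy' : f x' = y'⟩ (rfl : x = x')
    subst hy hy'
    rfl
  intro B hB
  convert hπ.measurableSet_image.2
    ((continuous_snd.comp continuous_subtype_val).measurable hB) using 1
  ext x
  refine ⟨fun hx => ⟨⟨(x, f x), rfl⟩, hx, rfl⟩, ?_⟩
  rintro ⟨⟨p, hp⟩, hpB, rfl⟩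
  exact mem_preimage.2 (hp ▸ hpB)

theorem MeasurableSet.setOf_exists_apply_mem {T X Y : Type*} [MeasurableSpace T]
    [TopologicalSpace X] [SeparableSpace X]
    [TopologicalSpace Y] [MeasurableSpace Y] [OpensMeasurableSpace Y]
    {f : T → X → Y} (hc : ∀ t, Continuous (f t)) (hm : ∀ x, Measurable (f · x))
    {V : Set Y} (hV : IsOpen V) : MeasurableSet {t | ∃ x, f t x ∈ V} := by
  obtain ⟨D, hDc, hD⟩ := exists_countable_dense X
  have hdense : {t | ∃ x, f t x ∈ V} = ⋃ x ∈ D, (f · x) ⁻¹' V := by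
    ext t
    simp only [mem_ofPred_eq, mem_iUnion, mem_preimage, exists_prop]
    exact ⟨fun ⟨x, hx⟩ => hD.exists_mem_open (hV.preimage (hc t)) ⟨x, hx⟩,
      fun ⟨x, _, hx⟩ => ⟨x, hx⟩⟩
  rw [hdense]
  exact .biUnion hDc fun x _ => hm x hV.measurableSet

section TopologicalGroup

variable {E : Type*} [Group E] [TopologicalSpace E] [IsTopologicalGroup E]

theorem BaireMeasurableSet.inv_mul_mem_nhds_one [BaireSpace E] {B : Set E}
    (hB : BaireMeasurableSet B) (hB' : ¬IsMeagre B) : B⁻¹ * B ∈ 𝓝 1 := by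
  obtain ⟨U, hUo, hBU⟩ := hB.residualEq_isOpen
  obtain ⟨u, hu⟩ : U.Nonempty := by
    refine nonempty_iff_ne_empty.2 fun hU => hB' ?_
    exact eventuallyEq_empty.1 (hU ▸ hBU)
  refine mem_of_superset ((hUo.preimage (continuous_const_mul u)).mem_nhds (by simpa)) ?_
  intro x hx
  have hU' : ∃ᵇ y, y ∈ U ∩ (· * x) ⁻¹' U :=
    not_isMeagre_of_isOpen (hUo.inter (hUo.preimage (continuous_mul_const x))) ⟨u, hu, hx⟩
  have hBU' : ((· * x) ⁻¹' B : Set E) =ᵇ (· * x) ⁻¹' U := hBU.comp_tendsto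
    (tendsto_residual_of_isOpenMap (continuous_mul_const x) (Homeomorph.mulRight x).isOpenMap)
  obtain ⟨y, ⟨hyU, hyxU⟩, hBy, hBxy⟩ := (hU'.and_eventually (hBU.and hBU')).exists
  simpa using mul_mem_mul (inv_mem_inv.2 (hBy.mpr hyU)) (hBxy.mpr hyxU)

theorem MonoidHom.continuous_of_measurable [BaireSpace E] [MeasurableSpace E] [BorelSpace E]
    {F : Type*} [Group F] [TopologicalSpace F] [IsTopologicalGroup F] [SeparableSpace F]
    [MeasurableSpace F] [OpensMeasurableSpace F] (φ : E →* F) (hφ : Measurable φ) :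
    Continuous φ := by
  refine continuous_of_continuousAt_one φ ?_
  rw [ContinuousAt, map_one]
  intro V hV
  obtain ⟨W, hW, hWc, hWinv, hWV⟩ := exists_closed_nhds_one_inv_eq_mul_subset hV
  obtain ⟨D, hDc, hD⟩ := exists_countable_dense F
  have hcover : ⋃ y ∈ D, {g | y⁻¹ * φ g ∈ W} = univ := by
    refine eq_univ_of_forall fun g => ?_
    have : (· ⁻¹ * φ g) ⁻¹' W ∈ 𝓝 (φ g) :=
      (continuous_inv.mul continuous_const).continuousAt.preimage_mem_nhds (by simpa using hW)
    obtain ⟨y, hyD, hyW⟩ := hD.inter_nhds_nonempty this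
    exact mem_biUnion hyD hyW
  obtain ⟨y, -, hy⟩ := exists_of_not_isMeagre_biUnion hDc
    (hcover ▸ not_isMeagre_of_isOpen isOpen_univ univ_nonempty)
  have hmeas : MeasurableSet {g | y⁻¹ * φ g ∈ W} :=
    hφ (hWc.preimage (continuous_const_mul y⁻¹)).measurableSet
  refine mem_map.2 (mem_of_superset (hmeas.baireMeasurableSet.inv_mul_mem_nhds_one hy) ?_)
  rintro _ ⟨a, ha, b, hb, rfl⟩
  have ha' : (y⁻¹ * φ a⁻¹)⁻¹ ∈ W := hWinv ▸ inv_mem_inv.2 ha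
  have hab : φ (a * b) = (y⁻¹ * φ a⁻¹)⁻¹ * (y⁻¹ * φ b) := by simp [mul_assoc]
  exact mem_preimage.2 (hab ▸ hWV (mul_mem_mul ha' hb))

theorem BaireMeasurableSet.isMeagre_or_mem_residual [SecondCountableTopology E] {Z : Set E}
    (hZ : BaireMeasurableSet Z) {D : Set E} (hD : Dense D)
    (hZD : ∀ d ∈ D, (· * d) ⁻¹' Z = Z) : IsMeagre Z ∨ Z ∈ residual E := by
  obtain ⟨U, hUo, hZU⟩ := hZ.residualEq_isOpen
  obtain rfl | ⟨u, hu⟩ := U.eq_empty_or_nonempty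
  · exact .inl (eventuallyEq_empty.1 hZU)
  obtain ⟨D₀, hD₀D, hD₀c, hD₀⟩ := hD.exists_countable_dense_subset
  set V := ⋃ d ∈ D₀, (· * d) ⁻¹' U
  have hV : V ∈ residual E := by
    refine residual_of_dense_open
      (isOpen_biUnion fun d _ => hUo.preimage (continuous_mul_const d)) ?_
    -- `x ∈ (· * d) ⁻¹' U` for `d = x⁻¹ * u`
    refine (hD₀.preimage ((Homeomorph.inv E).trans (Homeomorph.mulRight u)).isOpenMap).mono ?_
    intro x hx
    exact mem_biUnion hx (by simpa using hu)
  have hZV : Z =ᵇ V := by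
    have hZ : ⋃ d ∈ D₀, (· * d) ⁻¹' Z = Z := by
      obtain ⟨d₀, hd₀⟩ := hD₀.nonempty
      refine (iUnion₂_subset fun d hd => (hZD d (hD₀D hd)).subset).antisymm fun x hx => ?_
      exact mem_biUnion hd₀ ((hZD d₀ (hD₀D hd₀)).symm ▸ hx)
    rw [← hZ]
    exact .countable_bUnion hD₀c fun d _ => hZU.comp_tendsto
      (tendsto_residual_of_isOpenMap (continuous_mul_const d) (Homeomorph.mulRight d).isOpenMap)
  exact .inr ((congr_sets hZV.mem_iff).2 hV)

theorem exists_eventually_residual_eq_of_mul_right_invariant [SecondCountableTopology E]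
    {X : Type*} [TopologicalSpace X] [SecondCountableTopology X] {F : E → Set X}
    (hF : ∀ t, IsClosed (F t))
    (hFm : ∀ V, IsOpen V → BaireMeasurableSet {t | (F t ∩ V).Nonempty})
    {D : Set E} (hD : Dense D) (hFD : ∀ t, ∀ d ∈ D, F (t * d) = F t) :
    ∃ A, ∀ᵇ t, F t = A := by
  obtain ⟨bs, hbc, -, hb⟩ := exists_countable_basis X
  set Z : Set X → Set E := fun V => {t | (F t ∩ V).Nonempty}
  have hZ : ∀ V ∈ bs, ∀ᵇ t, (t ∈ Z V ↔ ¬IsMeagre (Z V)) := by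
    intro V hV
    by_cases hm : IsMeagre (Z V)
    · filter_upwards [hm] with t ht using iff_of_false ht (not_not.2 hm)
    · have hZD : ∀ d ∈ D, (· * d) ⁻¹' Z V = Z V := fun d hd => by
        ext t
        simp only [Z, mem_preimage, mem_ofPred_eq, hFD t d hd]
      filter_upwards [((hFm V (hb.isOpen hV)).isMeagre_or_mem_residual hD hZD).resolve_left hm]
        with t ht using iff_of_true ht hm
  -- generically, `F t` meets exactly the basic open sets `V` for which `Z V` is not meagre
  refine ⟨{x | ∀ V ∈ bs, x ∈ V → ¬IsMeagre (Z V)}, ?_⟩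
  filter_upwards [(eventually_countable_ball hbc).2 hZ] with t ht
  ext x
  refine ⟨fun hx V hV hxV => (ht V hV).1 ⟨x, hx, hxV⟩, fun hx => by_contra fun hxt => ?_⟩
  obtain ⟨V, hV, hxV, hVt⟩ := hb.exists_subset_of_mem_open hxt (hF t).isOpen_compl
  obtain ⟨y, hyt, hyV⟩ := (ht V hV).2 (hx V hV hxV)
  exact hVt hyV hyt

theorem IsClosed.smul_set_eq_self_of_dense [BaireSpace E] [SecondCountableTopology E]
    [MeasurableSpace E] [BorelSpace E] {X : Type*} [TopologicalSpace X] [SecondCountableTopology X]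
    [MeasurableSpace X] [OpensMeasurableSpace X] [MulAction E X] [ContinuousConstSMul E X]
    (hm : ∀ x : X, Measurable (· • x : E → X)) {K : Set X} (hK : IsClosed K) {D : Set E}
    (hD : Dense D) (hDK : ∀ d ∈ D, d • K = K) (h : E) : h • K = K := by
  have hKm : ∀ V, IsOpen V → BaireMeasurableSet {t : E | (t • K ∩ V).Nonempty} := fun V hV => by
    have := MeasurableSet.setOf_exists_apply_mem (f := fun (t : E) (k : K) => t • (k : X))
      (fun t => (continuous_const_smul t).comp continuous_subtype_val) (fun k => hm k) hV
    convert this.baireMeasurableSet using 1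
    ext t
    simp [Set.Nonempty, mem_smul_set]
  obtain ⟨A, hA⟩ := exists_eventually_residual_eq_of_mul_right_invariant (F := (· • K))
    (fun t => hK.smul t) hKm hD (fun t d hd => by simp only [mul_smul, hDK d hd])
  have hAh : ∀ᵇ s : E, (s * h) • K = A := tendsto_residual_of_isOpenMap
    (continuous_mul_const h) (Homeomorph.mulRight h).isOpenMap hA
  obtain ⟨s, hs, hsh⟩ := (dense_of_mem_residual (hA.and hAh)).nonempty
  rw [mul_smul, ← hs] at hsh
  exact smul_left_cancel s hsh

end TopologicalGroup

theorem Subgroup.Normal.image_mulAutConj {G : Type*} [Group G] {K : Subgroup G} (hK : K.Normal)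
    (g : G) : MulAut.conj g '' (K : Set G) = K := by
  have := congr_arg ((↑) : Subgroup G → Set G) (hK.conjAct (ConjAct.toConjAct g))
  rw [Subgroup.coe_pointwise_smul, ← image_smul] at this
  simp only [ConjAct.toConjAct_smul] at this
  exact this

namespace MonoidHom

variable {G H : Type*} [Group G] [Group H] (ψ : G →* H) [ψ.range.Normal]

noncomputable def conjPullback (hψ : Injective ψ) : H →* MulAut G :=
  (MulAut.congr (ofInjective hψ).symm).toMonoidHom.comp MulAut.conjNormal

variable {ψ} {hψ : Injective ψ}

theorem map_conjPullback_apply (t : H) (g : G) :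
    ψ (ψ.conjPullback hψ t g) = t * ψ g * t⁻¹ := by
  simp [conjPullback, MulAut.conjNormal_apply, ofInjective_apply]

theorem conjPullback_apply_eq_iff {t : H} {g x : G} :
    ψ.conjPullback hψ t g = x ↔ t * ψ g * t⁻¹ = ψ x := by
  rw [← map_conjPullback_apply, hψ.eq_iff]

theorem conjPullback_map (g : G) : ψ.conjPullback hψ (ψ g) = MulAut.conj g :=
  MulEquiv.ext fun _ => conjPullback_apply_eq_iff.2 (by simp)

theorem measurable_conjPullback_uncurry [TopologicalSpace G] [PolishSpace G] [MeasurableSpace G]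
    [BorelSpace G] [TopologicalSpace H] [IsTopologicalGroup H] [PolishSpace H]
    [MeasurableSpace H] [BorelSpace H] (hψc : Continuous ψ) :
    Measurable (uncurry fun t g => ψ.conjPullback hψ t g) := by
  refine measurable_of_isClosed_graph ?_
  change IsClosed {p : (H × G) × G | ψ.conjPullback hψ p.1.1 p.1.2 = p.2}
  simp_rw [conjPullback_apply_eq_iff]
  exact isClosed_eq (by fun_prop) (hψc.comp continuous_snd)

theorem continuous_conjPullback [TopologicalSpace G] [IsTopologicalGroup G] [PolishSpace G]
    [TopologicalSpace H] [IsTopologicalGroup H] [PolishSpace H] (hψc : Continuous ψ) (t : H) :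
    Continuous (ψ.conjPullback hψ t) := by
  borelize G H
  exact (ψ.conjPullback hψ t).toMonoidHom.continuous_of_measurable
    (measurable_conjPullback_uncurry hψc).of_uncurry_left

end MonoidHom

/-- Let `G` and `H` be Polish groups, let `ψ : G → H` be a normal compression,
and let `K` be a closed normal subgroup of `G`. Then the image `ψ(K)` is a normal subgroup
of `H`: for all `h ∈ H` and `k ∈ K`, the element `h·ψ(k)·h⁻¹` lies in `ψ(K)`. -/
theorem stmt_3 {G H : Type*}
    [Group G] [TopologicalSpace G] [IsTopologicalGroup G] [PolishSpace G]
    [Group H] [TopologicalSpace H] [IsTopologicalGroup H] [PolishSpace H]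
    (ψ : G →* H) (hψc : Continuous ψ) (hψi : Function.Injective ψ)
    (hdense : DenseRange (⇑ψ)) (hnorm : ψ.range.Normal)
    (K : Subgroup G) (hKc : IsClosed (K : Set G)) (hKn : K.Normal) :
    ∀ (h : H), ∀ k ∈ K, h * ψ k * h⁻¹ ∈ ψ '' (K : Set G) := by
  borelize G H
  let _ : MulAction H G := MulAction.compHom G (ψ.conjPullback hψi)
  have : ContinuousConstSMul H G := ⟨MonoidHom.continuous_conjPullback hψc⟩
  have hK : ∀ h : H, h • (K : Set G) = K := hKc.smul_set_eq_self_of_dense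
    (fun g => (MonoidHom.measurable_conjPullback_uncurry hψc).of_uncurry_right)
    hdense (by
      rintro _ ⟨g, rfl⟩
      rw [← image_smul]
      change ψ.conjPullback hψi (ψ g) '' K = K
      rw [MonoidHom.conjPullback_map]
      exact hKn.image_mulAutConj g)
  intro h k hk
  exact ⟨h • k, hK h ▸ smul_mem_smul_set hk, MonoidHom.map_conjPullback_apply h k⟩
end

section
/- Let G and H be Polish groups and let ψ : G → H be a normal compression. If G is totally disconnected (the connected component of the identity of G is trivial), then the connected component of the identity of H is central in H: every element of the connected component of 1 in H commutes with every element of H. -/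
/-!
Since `ψ(G)` is normal, each `h : H` acts on `G` by the automorphism `g ↦ ψ⁻¹(h ψ(g) h⁻¹)`.
By Lusin–Souslin `ψ` is a Borel isomorphism onto its image, so these automorphisms and the orbit
maps `h ↦ ψ⁻¹(h ψ(g) h⁻¹)` are Borel. A Borel map out of a Polish group that intertwines left
translation with a family of continuous maps is continuous (the Pettis argument: it is continuous
on a comeagre set, and translation moves any convergent sequence into that set). Hence each orbit
map is continuous and sends the identity component of `H` into the trivial component of `g`,
i.e. that component centralizes `ψ(G)`, which is dense.
-/

open Filter Topology Set

theorem exists_mem_residual_continuousOn_of_baireMeasurable {X Y : Type*} [TopologicalSpace X]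
    [TopologicalSpace Y] [SecondCountableTopology Y] {f : X → Y}
    (hf : ∀ s : Set Y, IsOpen s → BaireMeasurableSet (f ⁻¹' s)) :
    ∃ E ∈ residual X, ContinuousOn f E := by
  obtain ⟨b, hbc, -, hb⟩ := TopologicalSpace.exists_countable_basis Y
  have := hbc.to_subtype
  choose U hUopen hUeq using fun s : b => (hf s (hb.isOpen s.2)).residualEq_isOpen
  set E := {x | ∀ s : b, x ∈ f ⁻¹' (s : Set Y) ↔ x ∈ U s}
  have hE : E ∈ residual X :=
    eventually_countable_forall.mpr fun s => eventuallyEq_set.mp (hUeq s)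
  refine ⟨E, hE, fun x hx => tendsto_def.mpr fun V hV => ?_⟩
  obtain ⟨s, hsb, hfxs, hsV⟩ := hb.mem_nhds_iff.mp hV
  -- on `E`, the preimage of the basic open set `s` agrees with the open set `U s`
  filter_upwards [mem_nhdsWithin_of_mem_nhds ((hUopen ⟨s, hsb⟩).mem_nhds
    ((hx ⟨s, hsb⟩).mp hfxs)), self_mem_nhdsWithin] with y hyU hyE
  exact hsV ((hyE ⟨s, hsb⟩).mpr hyU)

section AutomaticContinuity

variable {H Y : Type*} [Group H] [TopologicalSpace H] [IsTopologicalGroup H] [TopologicalSpace Y]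

theorem continuous_of_continuousOn_mem_residual_of_map_mul [BaireSpace H] [SequentialSpace H]
    {φ : H → Y} (A : H → Y → Y) (hA : ∀ a, Continuous (A a))
    (hφ : ∀ a h, φ (a * h) = A a (φ h)) {E : Set H} (hE : E ∈ residual H)
    (hφE : ContinuousOn φ E) : Continuous φ := by
  rw [continuous_iff_seqContinuous]
  intro u x hu
  have htranslate : ∀ b : H, (· * b) ⁻¹' E ∈ residual H := fun b =>
    mem_map.mp ((Homeomorph.mulRight b).residual_map_eq.symm ▸ hE)
  -- translate `x` and the whole sequence into `E` by one and the same left multiplication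
  obtain ⟨a, hax, hau⟩ : ∃ a, a * x ∈ E ∧ ∀ n, a * u n ∈ E :=
    (dense_of_mem_residual (inter_mem (htranslate x)
      (countable_iInter_mem.mpr fun n => htranslate (u n)))).nonempty.imp
      fun a ha => ⟨ha.1, mem_iInter.mp ha.2⟩
  have hlim : Tendsto (fun n => φ (a * u n)) atTop (𝓝 (φ (a * x))) :=
    (hφE _ hax).tendsto.comp (tendsto_nhdsWithin_iff.mpr
      ⟨hu.const_mul a, Eventually.of_forall hau⟩)
  have hcancel : ∀ y, A a⁻¹ (φ (a * y)) = φ y := fun y => by rw [← hφ, inv_mul_cancel_left]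
  simpa only [Function.comp_def, hcancel] using ((hA a⁻¹).tendsto _).comp hlim

theorem continuous_of_measurable_of_map_mul [PolishSpace H] [MeasurableSpace H] [BorelSpace H]
    [SecondCountableTopology Y] [MeasurableSpace Y] [OpensMeasurableSpace Y]
    {φ : H → Y} (A : H → Y → Y) (hA : ∀ a, Continuous (A a))
    (hφ : ∀ a h, φ (a * h) = A a (φ h)) (hφm : Measurable φ) : Continuous φ :=
  have ⟨_E, hE, hφE⟩ := exists_mem_residual_continuousOn_of_baireMeasurable fun _s hs =>
    (hφm hs.measurableSet).baireMeasurableSet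
  continuous_of_continuousOn_mem_residual_of_map_mul A hA hφ hE hφE

theorem MonoidHom.continuous_of_measurable_s9 [PolishSpace H] [MeasurableSpace H] [BorelSpace H]
    {G : Type*} [Group G] [TopologicalSpace G] [IsTopologicalGroup G] [SecondCountableTopology G]
    [MeasurableSpace G] [OpensMeasurableSpace G] (f : H →* G) (hf : Measurable f) :
    Continuous f :=
  continuous_of_measurable_of_map_mul (fun a => (f a * ·)) (fun _ => continuous_const_mul _)
    (fun _ _ => map_mul f _ _) hf

end AutomaticContinuity

namespace MonoidHom

section Conj

variable {G H : Type*} [Group G] [Group H] (ψ : G →* H) (hψ : Function.Injective ψ)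
  [ψ.range.Normal]

noncomputable def conjRange : H →* MulAut G :=
  (MulAut.congr (ψ.ofInjective hψ)).symm.toMonoidHom.comp MulAut.conjNormal

theorem map_conjRange_apply (h : H) (g : G) : ψ (ψ.conjRange hψ h g) = h * ψ g * h⁻¹ := by
  simp [conjRange, MulAut.congr, ofInjective_apply]

end Conj

variable {G H : Type*} [Group G] [TopologicalSpace G] [PolishSpace G] [Group H]
  [TopologicalSpace H] {ψ : G →* H}

/-- Lusin–Souslin makes `ψ` a Borel isomorphism onto its image, so `f` is Borel as soon as
`ψ ∘ f` is continuous. -/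
theorem measurable_of_continuous_comp [MeasurableSpace G] [BorelSpace G] [T2Space H]
    (hψc : Continuous ψ) (hψi : Function.Injective ψ) {X : Type*} [TopologicalSpace X]
    [MeasurableSpace X] [OpensMeasurableSpace X] {f : X → G} (hf : Continuous (ψ ∘ f)) :
    Measurable f := by
  borelize H
  exact (hψc.measurableEmbedding hψi).measurable_comp_iff.mp hf.measurable

variable [IsTopologicalGroup G] [IsTopologicalGroup H] [ψ.range.Normal]

theorem continuous_conjRange_apply [T2Space H] (hψc : Continuous ψ)
    (hψi : Function.Injective ψ) (h : H) : Continuous (ψ.conjRange hψi h) := by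
  borelize G
  refine (ψ.conjRange hψi h).toMonoidHom.continuous_of_measurable_s9
    (measurable_of_continuous_comp hψc hψi ?_)
  simp only [Function.comp_def, MulEquiv.coe_toMonoidHom, map_conjRange_apply]
  fun_prop

theorem continuous_conjRange_apply_left [PolishSpace H] (hψc : Continuous ψ)
    (hψi : Function.Injective ψ) (g : G) : Continuous fun h => ψ.conjRange hψi h g := by
  borelize G H
  refine continuous_of_measurable_of_map_mul (fun a => ψ.conjRange hψi a)
    (continuous_conjRange_apply hψc hψi) (fun a h => by rw [map_mul, MulAut.mul_apply])
    (measurable_of_continuous_comp hψc hψi ?_)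
  simp only [Function.comp_def, map_conjRange_apply]
  fun_prop

theorem commute_of_mem_connectedComponent_one [PolishSpace H] [TotallyDisconnectedSpace G]
    (hψc : Continuous ψ) (hψi : Function.Injective ψ) {h : H} (hh : h ∈ connectedComponent 1)
    (g : G) : Commute h (ψ g) := by
  have hfix : ψ.conjRange hψi h g = g := by
    have := (continuous_conjRange_apply_left hψc hψi g).image_connectedComponent_eq_singleton 1
    simpa [this] using mem_image_of_mem (fun h => ψ.conjRange hψi h g) hh
  have := ψ.map_conjRange_apply hψi h g
  rw [hfix, eq_mul_inv_iff_mul_eq] at this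
  exact this.symm

end MonoidHom

/-- Let `G` and `H` be Polish groups and let `ψ : G → H` be a normal
compression. If `G` is totally disconnected (the connected component of the identity of `G`
is trivial), then the connected component of the identity of `H` is central in `H`. -/
theorem stmt_9 {G H : Type*}
    [Group G] [TopologicalSpace G] [IsTopologicalGroup G] [PolishSpace G]
    [Group H] [TopologicalSpace H] [IsTopologicalGroup H] [PolishSpace H]
    (ψ : G →* H) (hψc : Continuous ψ) (hψi : Function.Injective ψ)
    (hdense : DenseRange (⇑ψ)) (hnorm : ψ.range.Normal)
    (htd : connectedComponent (1 : G) = {1}) :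
    ∀ h ∈ connectedComponent (1 : H), ∀ h' : H, h * h' = h' * h := by
  have := totallyDisconnectedSpace_iff_connectedComponent_one.mpr htd
  intro h hh h'
  exact hdense.induction_on (p := fun h' => h * h' = h' * h) h'
    (isClosed_eq (continuous_const_mul h) (continuous_mul_const h))
    (MonoidHom.commute_of_mem_connectedComponent_one hψc hψi hh)
end
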